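/- Let K be a finite nonempty set and Γ a set of finite sequences of elements of K (of length ≥ 2) satisfying: (a) if (a,b) ∈ Γ and (b,c) ∈ Γ then (a,b,c) ∈ Γ; (b) if (κ₁,…,κ_n) ∈ Γ then (κ₁,κ_n) ∈ Γ; (c) for every γ ∈ K there exist α, β ∈ K with (α,γ) ∈ Γ and (γ,β) ∈ Γ; (d) if (α,β) ∈ Γ, (α,α) ∈ Γ and (β,β) ∈ Γ, then (β,α) ∈ Γ. Then (γ,γ) ∈ Γ for every γ ∈ K. -/
import Mathlib


/-- Combinatorial core of "every broken binding orbit has a homoclinic": for a finite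
nonempty `K` and a set `Γ` of finite sequences (length ≥ 2) in `K` satisfying the four
closure properties (a)-(d), every `γ ∈ K` satisfies `(γ,γ) ∈ Γ`. -/
theorem stmt5 {K : Type*} [Finite K] [Nonempty K] (Γ : Set (List K))
    (hlen : ∀ l ∈ Γ, 2 ≤ l.length)
    (ha : ∀ a b c : K, [a, b] ∈ Γ → [b, c] ∈ Γ → [a, b, c] ∈ Γ)
    (hb : ∀ (a : K) (l : List K) (b : K), (a :: (l ++ [b])) ∈ Γ → [a, b] ∈ Γ)
    (hc : ∀ γ : K, ∃ α β : K, [α, γ] ∈ Γ ∧ [γ, β] ∈ Γ)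
    (hd : ∀ α β : K, [α, β] ∈ Γ → [α, α] ∈ Γ → [β, β] ∈ Γ → [β, α] ∈ Γ) :
    ∀ γ : K, [γ, γ] ∈ Γ := by
  classical
  -- the binary relation
  set R : K → K → Prop := fun a b => [a, b] ∈ Γ with hR
  have htrans : ∀ a b c : K, R a b → R b c → R a c := by
    intro a b c hab hbc
    exact hb a [b] c (ha a b c hab hbc)
  -- successor and predecessor functions
  have hsucc : ∀ γ : K, ∃ β, R γ β := by
    intro γ; obtain ⟨α, β, _, h⟩ := hc γ; exact ⟨β, h⟩
  have hpred : ∀ γ : K, ∃ α, R α γ := by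
    intro γ; obtain ⟨α, β, h, _⟩ := hc γ; exact ⟨α, h⟩
  set s : K → K := fun γ => Classical.choose (hsucc γ) with hs
  have hsspec : ∀ γ, R γ (s γ) := fun γ => Classical.choose_spec (hsucc γ)
  set p : K → K := fun γ => Classical.choose (hpred γ) with hp
  have hpspec : ∀ γ, R (p γ) γ := fun γ => Classical.choose_spec (hpred γ)
  -- key: for every γ there is β with R γ β and R β β
  have key_fwd : ∀ γ : K, R γ γ ∨ ∃ β, R γ β ∧ R β β := by
    intro γ
    set f : ℕ → K := fun n => s^[n] γ with hf
    have hstep : ∀ n, R (f n) (f (n + 1)) := by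
      intro n
      have : f (n + 1) = s (f n) := Function.iterate_succ_apply' s n γ
      rw [this]; exact hsspec (f n)
    have hchain : ∀ m n, m < n → R (f m) (f n) := by
      intro m n hmn
      induction n with
      | zero => omega
      | succ k ih =>
        rcases Nat.lt_succ_iff_lt_or_eq.mp hmn with h | h
        · exact htrans _ _ _ (ih h) (hstep k)
        · subst h; exact hstep m
    obtain ⟨i, j, hij, hfij⟩ := Finite.exists_ne_map_eq_of_infinite f
    rcases Nat.lt_or_ge i j with h | h
    · have hii : R (f i) (f i) := by nth_rewrite 2 [hfij]; exact hchain i j h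
      rcases Nat.eq_zero_or_pos i with h0 | h0
      · left; subst h0; exact hii
      · right; exact ⟨f i, hchain 0 i h0, hii⟩
    · have hji : j < i := lt_of_le_of_ne h fun h => hij h.symm
      have hjj : R (f j) (f j) := by nth_rewrite 2 [← hfij]; exact hchain j i hji
      rcases Nat.eq_zero_or_pos j with h0 | h0
      · left; subst h0; exact hjj
      · right; exact ⟨f j, hchain 0 j h0, hjj⟩
  have key_bwd : ∀ γ : K, R γ γ ∨ ∃ α, R α γ ∧ R α α := by
    intro γ
    set g : ℕ → K := fun n => p^[n] γ with hg
    have hstep : ∀ n, R (g (n + 1)) (g n) := by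
      intro n
      have : g (n + 1) = p (g n) := Function.iterate_succ_apply' p n γ
      rw [this]; exact hpspec (g n)
    have hchain : ∀ m n, m < n → R (g n) (g m) := by
      intro m n hmn
      induction n with
      | zero => omega
      | succ k ih =>
        rcases Nat.lt_succ_iff_lt_or_eq.mp hmn with h | h
        · exact htrans _ _ _ (hstep k) (ih h)
        · subst h; exact hstep m
    obtain ⟨i, j, hij, hgij⟩ := Finite.exists_ne_map_eq_of_infinite g
    rcases Nat.lt_or_ge i j with h | h
    · have hii : R (g i) (g i) := by nth_rewrite 1 [hgij]; exact hchain i j h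
      rcases Nat.eq_zero_or_pos i with h0 | h0
      · left; subst h0; exact hii
      · right; exact ⟨g i, hchain 0 i h0, hii⟩
    · have hji : j < i := lt_of_le_of_ne h fun h => hij h.symm
      have hjj : R (g j) (g j) := by nth_rewrite 1 [← hgij]; exact hchain j i hji
      rcases Nat.eq_zero_or_pos j with h0 | h0
      · left; subst h0; exact hjj
      · right; exact ⟨g j, hchain 0 j h0, hjj⟩
  intro γ
  rcases key_fwd γ with h | ⟨β, hγβ, hββ⟩
  · exact h
  rcases key_bwd γ with h | ⟨α, hαγ, hαα⟩
  · exact h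
  have hαβ : R α β := htrans _ _ _ hαγ hγβ
  have hβα : R β α := hd α β hαβ hαα hββ
  exact htrans _ _ _ hγβ (htrans _ _ _ hβα hαγ)
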